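/- arXiv:2605.17574 — 5 statements merged into one kernel-verified Lean document; each statement's English description precedes it below -/
import Mathlib

section
/- Let P[i..j] be an f-MEM of P with respect to T that contains no complete phrase of PFP(P) and is split across two consecutive phrases PFP(P)[a] and PFP(P)[a+1], exactly one of which occurs at least f times in PFP(T). Then that phrase is the first or last phrase of an f-MEM of PFP(P) with respect to PFP(T), and P[i..j] is contained in the pseudo-MEM corresponding to the phrase sequence in S_1 arising from that f-MEM of the parse. -/
/-- The substring of `S` at 0-indexed closed positions `[i..j]`. -/
def strSub {α : Type*} (S : List α) (i j : ℕ) : List α := (S.drop i).take (j + 1 - i)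

/-- `S` occurs as a contiguous substring of `X` at 0-indexed position `p`. -/
def occursAt {α : Type*} (S X : List α) (p : ℕ) : Prop :=
  p + S.length ≤ X.length ∧ (X.drop p).take S.length = S

/-- The number of occurrences of `S` as a contiguous substring of `X`. -/
def occCount {α : Type*} [DecidableEq α] (S X : List α) : ℕ :=
  ((Finset.range (X.length + 1)).filter
    (fun p => p + S.length ≤ X.length ∧ (X.drop p).take S.length = S)).card

/-- `P[i..j]` (0-indexed, closed) is an `f`-MEM of `P` with respect to `T`. -/
def IsMEM {α : Type*} [DecidableEq α] (f : ℕ) (P T : List α) (i j : ℕ) : Prop :=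
  i ≤ j ∧ j < P.length ∧ f ≤ occCount (strSub P i j) T ∧
  (i = 0 ∨ occCount (strSub P (i - 1) j) T < f) ∧
  (j + 1 = P.length ∨ occCount (strSub P i (j + 1)) T < f)

/-- The trigger positions of `S` under window width `w` and trigger predicate `h`:
positions `q` with `w ≤ q ≤ |S|` such that `h` holds of the `w` characters ending at
(1-indexed) position `q`. -/
def pfpTriggers {α : Type*} (w : ℕ) (h : List α → Bool) (S : List α) : List ℕ :=
  (List.range (S.length + 1)).filter (fun q => decide (w ≤ q) && h ((S.drop (q - w)).take w))

/-- 0-indexed starting positions of the phrases of the prefix-free parse of `S`. -/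
def pfpStarts {α : Type*} (w : ℕ) (h : List α → Bool) (S : List α) : List ℕ :=
  0 :: (pfpTriggers w h S).map (fun q => q - w)

/-- Exclusive ending positions of the phrases of the prefix-free parse of `S`. -/
def pfpEnds {α : Type*} (w : ℕ) (h : List α → Bool) (S : List α) : List ℕ :=
  pfpTriggers w h S ++ [S.length]

/-- The prefix-free parse of `S`, as the list of its phrases. -/
def PFP {α : Type*} (w : ℕ) (h : List α → Bool) (S : List α) : List (List α) :=
  ((pfpStarts w h S).zip (pfpEnds w h S)).map (fun se => (S.drop se.1).take (se.2 - se.1))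

/-- The starting position in `S` of phrase `i` (0-indexed) of `PFP(S)`. -/
def pfpStart {α : Type*} (w : ℕ) (h : List α → Bool) (S : List α) (i : ℕ) : ℕ :=
  (pfpStarts w h S).getD i 0

/-- The exclusive ending position in `S` of phrase `j` (0-indexed) of `PFP(S)`. -/
def pfpEnd {α : Type*} (w : ℕ) (h : List α → Bool) (S : List α) (j : ℕ) : ℕ :=
  (pfpEnds w h S).getD j 0

/-- The substring of `S` that becomes the phrase sequence `PFP(S)[i..j]` (0-indexed):
from the first character of phrase `i` to the last character of phrase `j`. -/
def pfpBecomes {α : Type*} (w : ℕ) (h : List α → Bool) (S : List α) (i j : ℕ) : List α :=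
  (S.drop (pfpStart w h S i)).take (pfpEnd w h S j - pfpStart w h S i)

/-- The pair `(l, r)` of 0-indexed phrase positions delimits a phrase sequence in `S₁`:
`PFP(P)[l..r]` is obtained from an `f`-MEM `PFP(P)[i..j]` of `PFP(P)` with respect to
`PFP(T)` by extending one phrase in each direction where possible. -/
def inS1 {α : Type*} [DecidableEq α] (w f : ℕ) (h : List α → Bool) (P T : List α)
    (l r : ℕ) : Prop :=
  ∃ i j, IsMEM f (PFP w h P) (PFP w h T) i j ∧
    l = i - 1 ∧ r = min (j + 1) ((PFP w h P).length - 1)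

/-- The pair `(l, r)` of 0-indexed phrase positions delimits a phrase sequence in `S₂`:
`r = l + 1` and neither phrase `PFP(P)[l]` nor phrase `PFP(P)[l+1]` occurs in `PFP(T)`. -/
def inS2 {α : Type*} [DecidableEq α] (w : ℕ) (h : List α → Bool) (P T : List α)
    (l r : ℕ) : Prop :=
  r = l + 1 ∧ l + 1 < (PFP w h P).length ∧
  (PFP w h P).getD l [] ∉ PFP w h T ∧ (PFP w h P).getD (l + 1) [] ∉ PFP w h T

/-!
Say phrase `a` is frequent in `PFP(T)` and phrase `a + 1` is not. Extending the one-phrase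
match `PFP(P)[a]` to the left as far as it stays frequent gives an `f`-MEM of the parse ending
at `a`: it cannot be extended to the right, since the longer sequence would contain the
infrequent phrase `a + 1`. The pseudo-MEM of this MEM reaches from the start of a phrase at or
before phrase `a` to the end of phrase `a + 1`, and `P[i..j]` lies within phrases `a` and
`a + 1`. The case where only phrase `a + 1` is frequent is symmetric.
-/

section Occurrences

variable {β : Type*} [DecidableEq β]

theorem occCount_append_le_left (u v X : List β) : occCount (u ++ v) X ≤ occCount u X := by
  unfold occCount
  refine Finset.card_le_card fun p hp => ?_
  simp only [Finset.mem_filter, Finset.mem_range, List.length_append] at hp ⊢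
  obtain ⟨hpX, hlen, hocc⟩ := hp
  refine ⟨hpX, by omega, ?_⟩
  have hprefix := congrArg (List.take u.length) hocc
  rwa [List.take_take, min_eq_left (Nat.le_add_right _ _), List.take_left] at hprefix

theorem occCount_append_le_right (u v X : List β) : occCount (u ++ v) X ≤ occCount v X := by
  unfold occCount
  refine Finset.card_le_card_of_injOn (· + u.length) (fun p hp => ?_)
    (fun _ _ _ _ hpq => Nat.add_right_cancel hpq)
  simp only [Finset.mem_coe, Finset.mem_filter, Finset.mem_range, List.length_append] at hp ⊢
  obtain ⟨hpX, hlen, hocc⟩ := hp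
  refine ⟨by omega, by omega, ?_⟩
  have hsuffix := congrArg (List.drop u.length) hocc
  rwa [List.drop_take, Nat.add_sub_cancel_left, List.drop_left, List.drop_drop] at hsuffix

theorem occCount_le_of_infix {u v : List β} (huv : u <:+: v) (X : List β) :
    occCount v X ≤ occCount u X := by
  obtain ⟨s, t, rfl⟩ := huv
  calc occCount (s ++ u ++ t) X ≤ occCount (s ++ u) X := occCount_append_le_left _ _ _
    _ ≤ occCount u X := occCount_append_le_right _ _ _

end Occurrences

section Substrings

variable {β : Type*}

theorem strSub_infix_strSub (Q : List β) {i j k l : ℕ} (hik : i ≤ k) (hlj : l ≤ j) :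
    strSub Q k l <:+: strSub Q i j := by
  have hQ : strSub Q k l = ((strSub Q i j).drop (k - i)).take (l + 1 - k) := by
    rw [strSub, strSub, List.drop_take, List.drop_drop, List.take_take,
      Nat.add_sub_cancel' hik, min_eq_left (by omega)]
  rw [hQ]
  exact (List.take_prefix _ _).isInfix.trans (List.drop_suffix _ _).isInfix

theorem strSub_self (Q : List β) {c : ℕ} (hc : c < Q.length) (d : β) :
    strSub Q c c = [Q.getD c d] := by
  rw [strSub, List.drop_eq_getElem_cons hc, Nat.add_sub_cancel_left, List.getD_eq_getElem _ _ hc]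
  rfl

variable [DecidableEq β]

theorem occCount_strSub_le (Q X : List β) {i j k l : ℕ} (hik : i ≤ k) (hlj : l ≤ j) :
    occCount (strSub Q i j) X ≤ occCount (strSub Q k l) X :=
  occCount_le_of_infix (strSub_infix_strSub Q hik hlj) X

end Substrings

section MaximalMatches

variable {β : Type*} [DecidableEq β] {f : ℕ} {Q X : List β} {c : ℕ}

theorem exists_isMEM_of_not_extendable_right (hc : c < Q.length)
    (hfreq : f ≤ occCount (strSub Q c c) X)
    (hright : c + 1 = Q.length ∨ occCount (strSub Q c (c + 1)) X < f) :
    ∃ i', IsMEM f Q X i' c := by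
  have hex : ∃ k, f ≤ occCount (strSub Q k c) X := ⟨c, hfreq⟩
  have hstart : Nat.find hex ≤ c := Nat.find_min' hex hfreq
  refine ⟨Nat.find hex, hstart, hc, Nat.find_spec hex, ?_, ?_⟩
  · rcases Nat.eq_zero_or_pos (Nat.find hex) with hzero | hpos
    · exact Or.inl hzero
    · exact Or.inr (not_le.mp (Nat.find_min hex (Nat.sub_lt hpos one_pos)))
  · exact hright.imp_right (lt_of_le_of_lt (occCount_strSub_le Q X hstart le_rfl))

theorem exists_isMEM_of_not_extendable_left (hc : c < Q.length)
    (hfreq : f ≤ occCount (strSub Q c c) X)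
    (hleft : c = 0 ∨ occCount (strSub Q (c - 1) c) X < f) :
    ∃ j', IsMEM f Q X c j' := by
  let frequent : ℕ → Prop := fun k => f ≤ occCount (strSub Q c k) X
  set j' := Nat.findGreatest frequent (Q.length - 1)
  have hend : c ≤ j' := Nat.le_findGreatest (by omega) hfreq
  have hlt : j' < Q.length := lt_of_le_of_lt (Nat.findGreatest_le _) (by omega)
  have hspec : frequent j' := Nat.findGreatest_spec (by omega : c ≤ _) hfreq
  refine ⟨j', hend, hlt, hspec, ?_, ?_⟩
  · exact hleft.imp_right (lt_of_le_of_lt (occCount_strSub_le Q X le_rfl hend))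
  · by_cases hlast : j' + 1 = Q.length
    · exact Or.inl hlast
    · exact Or.inr (not_le.mp
        (Nat.findGreatest_is_greatest (P := frequent) (Nat.lt_succ_self j') (by omega)))

end MaximalMatches

theorem List.getD_le_getD_of_sortedLE {γ : Type*} [Preorder γ] {l : List γ} (hl : l.SortedLE)
    (d : γ) {k m : ℕ} (hkm : k ≤ m) (hm : m < l.length) : l.getD k d ≤ l.getD m d := by
  rw [List.getD_eq_getElem _ _ (lt_of_le_of_lt hkm hm), List.getD_eq_getElem _ _ hm]
  exact hl.getElem_le_getElem_of_le hkm

section Parse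

variable {α : Type*} (w : ℕ) (h : List α → Bool) (S : List α)

theorem pfpTriggers_pairwise_lt : (pfpTriggers w h S).Pairwise (· < ·) :=
  List.pairwise_lt_range.filter _

theorem pfpStarts_sortedLE : (pfpStarts w h S).SortedLE := by
  refine List.Pairwise.sortedLE (List.pairwise_cons.mpr ⟨fun _ _ => Nat.zero_le _, ?_⟩)
  exact List.pairwise_map.mpr ((pfpTriggers_pairwise_lt w h S).imp fun hqr => by omega)

theorem pfpEnds_sortedLE : (pfpEnds w h S).SortedLE := by
  refine List.Pairwise.sortedLE (List.pairwise_append.mpr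
    ⟨(pfpTriggers_pairwise_lt w h S).imp le_of_lt, List.pairwise_singleton _ _, ?_⟩)
  intro q hq _ hlast
  rw [List.mem_singleton] at hlast
  subst hlast
  have := List.mem_range.mp (List.mem_of_mem_filter hq)
  omega

theorem pfpStarts_length : (pfpStarts w h S).length = (PFP w h S).length := by
  simp [PFP, pfpStarts, pfpEnds]

theorem pfpEnds_length : (pfpEnds w h S).length = (PFP w h S).length := by
  simp [PFP, pfpStarts, pfpEnds]

variable {w h S}

theorem pfpStart_mono {k m : ℕ} (hkm : k ≤ m) (hm : m < (PFP w h S).length) :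
    pfpStart w h S k ≤ pfpStart w h S m :=
  List.getD_le_getD_of_sortedLE (pfpStarts_sortedLE w h S) 0 hkm
    (by rwa [pfpStarts_length])

theorem pfpEnd_mono {k m : ℕ} (hkm : k ≤ m) (hm : m < (PFP w h S).length) :
    pfpEnd w h S k ≤ pfpEnd w h S m :=
  List.getD_le_getD_of_sortedLE (pfpEnds_sortedLE w h S) 0 hkm
    (by rwa [pfpEnds_length])

end Parse

theorem split_two_phrases_one_frequent_general {α : Type*} [DecidableEq α] (w f : ℕ)
    (h : List α → Bool) (P T : List α)
    (i j a : ℕ) (ha : a + 1 < (PFP w h P).length)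
    (hsplit1 : pfpStart w h P a ≤ i)
    (hsplit4 : j < pfpEnd w h P (a + 1))
    (hxor : Xor' (f ≤ occCount [(PFP w h P).getD a []] (PFP w h T))
                 (f ≤ occCount [(PFP w h P).getD (a + 1) []] (PFP w h T))) :
    ∃ c, (c = a ∨ c = a + 1) ∧ f ≤ occCount [(PFP w h P).getD c []] (PFP w h T) ∧
      ∃ i' j', IsMEM f (PFP w h P) (PFP w h T) i' j' ∧ (i' = c ∨ j' = c) ∧
        pfpStart w h P (i' - 1) ≤ i ∧
        j + 1 ≤ pfpEnd w h P (min (j' + 1) ((PFP w h P).length - 1)) := by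
  have hpair : ∀ c, (c = a ∨ c = a + 1) →
      ¬ f ≤ occCount [(PFP w h P).getD c []] (PFP w h T) →
      occCount (strSub (PFP w h P) a (a + 1)) (PFP w h T) < f := by
    intro c hc hinfreq
    rw [← strSub_self _ (by omega) []] at hinfreq
    exact (occCount_strSub_le _ _ (by omega) (by omega)).trans_lt (not_le.mp hinfreq)
  rcases hxor with ⟨hfreq, hinfreq⟩ | ⟨hfreq, hinfreq⟩
  · obtain ⟨i', hmem⟩ := exists_isMEM_of_not_extendable_right (c := a) (by omega)
      (by rwa [strSub_self _ (by omega) []]) (Or.inr (hpair (a + 1) (Or.inr rfl) hinfreq))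
    refine ⟨a, Or.inl rfl, hfreq, i', a, hmem, Or.inr rfl, ?_, ?_⟩
    · exact (pfpStart_mono (by have := hmem.1; omega) (by omega)).trans hsplit1
    · rw [min_eq_left (by omega)]
      omega
  · obtain ⟨j', hmem⟩ := exists_isMEM_of_not_extendable_left ha
      (by rwa [strSub_self _ ha []]) (Or.inr (hpair a (Or.inl rfl) hinfreq))
    refine ⟨a + 1, Or.inr rfl, hfreq, a + 1, j', hmem, Or.inl rfl, hsplit1, ?_⟩
    exact hsplit4.trans_le (pfpEnd_mono (by have := hmem.1; omega) (by omega))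

/-- Let `P[i..j]` (0-indexed) be an `f`-MEM of `P` with respect to `T`
that contains no complete phrase of `PFP(P)` and is split across two consecutive phrases
`PFP(P)[a]` and `PFP(P)[a+1]`, exactly one of which occurs at least `f` times in
`PFP(T)`. Then that phrase is the first or last phrase of an `f`-MEM of `PFP(P)` with
respect to `PFP(T)`, and `P[i..j]` is contained in the pseudo-MEM corresponding to the
phrase sequence in `S₁` arising from that `f`-MEM of the parse. -/
theorem split_two_phrases_one_frequent {α : Type*} [DecidableEq α] (w f : ℕ) (hw : 1 ≤ w)
    (hf : 1 ≤ f) (h : List α → Bool) (P T : List α)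
    (hN : 2 ≤ (PFP w h P).length)
    (i j a : ℕ) (hmem : IsMEM f P T i j) (ha : a + 1 < (PFP w h P).length)
    (hsplit1 : pfpStart w h P a ≤ i) (hsplit2 : i < pfpEnd w h P a)
    (hsplit3 : pfpEnd w h P a ≤ j) (hsplit4 : j < pfpEnd w h P (a + 1))
    (hnophrase : ∀ c, c < (PFP w h P).length →
      ¬ (i ≤ pfpStart w h P c ∧ pfpEnd w h P c ≤ j + 1))
    (hxor : Xor' (f ≤ occCount [(PFP w h P).getD a []] (PFP w h T))
                 (f ≤ occCount [(PFP w h P).getD (a + 1) []] (PFP w h T))) :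
    ∃ c, (c = a ∨ c = a + 1) ∧ f ≤ occCount [(PFP w h P).getD c []] (PFP w h T) ∧
      ∃ i' j', IsMEM f (PFP w h P) (PFP w h T) i' j' ∧ (i' = c ∨ j' = c) ∧
        pfpStart w h P (i' - 1) ≤ i ∧
        j + 1 ≤ pfpEnd w h P (min (j' + 1) ((PFP w h P).length - 1)) :=
  split_two_phrases_one_frequent_general w f h P T i j a ha hsplit1 hsplit4 hxor
end

section
/- Every f-MEM of P with respect to T of length at least k is contained in some KeBaB pseudo-MEM of P. (In particular, with f = 1 and g exactly the set of k-mers of T, the maximal substrings of P consisting only of k-mers of T contain all MEMs of P with respect to T of length at least k.) -/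
/-- The predicate `g` holds for every `k`-mer of the substring `P[a..b]`
(0-indexed, closed). -/
def kmersGood {α : Type*} (g : List α → Prop) (k : ℕ) (P : List α) (a b : ℕ) : Prop :=
  ∀ p, a ≤ p → p + k ≤ b + 1 → g ((P.drop p).take k)

/-- `P[a..b]` (0-indexed, closed) is a KeBaB pseudo-MEM of `P`: a maximal substring of
length at least `k` all of whose `k`-mers satisfy `g`. -/
def IsKebabPM {α : Type*} (g : List α → Prop) (k : ℕ) (P : List α) (a b : ℕ) : Prop :=
  b < P.length ∧ a + k ≤ b + 1 ∧ kmersGood g k P a b ∧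
  (a = 0 ∨ ¬ kmersGood g k P (a - 1) b) ∧
  (b + 1 = P.length ∨ ¬ kmersGood g k P a (b + 1))

/-!
Every `k`-mer of a MEM is a factor of it, so it occurs in `T` at least as often as the MEM,
hence at least `f` times, and `g` holds on it. The MEM is therefore a stretch of `P` whose
`k`-mers all satisfy `g`; extending it to the left as far as possible and then to the right
as far as possible yields a pseudo-MEM containing it.
-/

theorem occCount_le_occCount_of_isInfix {α : Type*} [DecidableEq α] {S S' : List α}
    (h : S' <:+: S) (X : List α) : occCount S X ≤ occCount S' X := by
  obtain ⟨s, t, rfl⟩ := h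
  unfold occCount
  apply Finset.card_le_card_of_injOn (· + s.length)
  · intro p hp
    simp only [Finset.coe_filter, Finset.mem_range, Set.mem_ofPred_eq, List.length_append] at hp ⊢
    obtain ⟨-, hpX, hocc⟩ := hp
    refine ⟨by omega, by omega, ?_⟩
    have hshift := congrArg (fun l => (l.drop s.length).take S'.length) hocc
    simp only [List.drop_take, List.take_take, List.drop_drop, List.append_assoc,
      List.drop_left, List.take_left] at hshift
    rwa [min_eq_left (by omega)] at hshift
  · intro x _ y _ hxy
    exact Nat.add_right_cancel hxy

theorem take_drop_isInfix_strSub {α : Type*} (P : List α) {i j p k : ℕ} (hip : i ≤ p)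
    (hpk : p + k ≤ j + 1) : (P.drop p).take k <:+: strSub P i j := by
  have hfactor : (P.drop p).take k = ((strSub P i j).drop (p - i)).take k := by
    rw [strSub, List.drop_take, List.drop_drop, List.take_take]
    congr 1
    · omega
    · congr 1; omega
  rw [hfactor]
  exact (List.take_prefix _ _).isInfix.trans (List.drop_suffix _ _).isInfix

theorem kmersGood.mono {α : Type*} {g : List α → Prop} {k : ℕ} {P : List α} {a b a' b' : ℕ}
    (h : kmersGood g k P a b) (ha : a ≤ a') (hb : b' ≤ b) : kmersGood g k P a' b' :=
  fun p hp hpk => h p (ha.trans hp) (by omega)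

theorem kmersGood_of_le_occCount {α : Type*} [DecidableEq α] {k f : ℕ} {g : List α → Prop}
    {P T : List α} (hg : ∀ x : List α, x.length = k → f ≤ occCount x T → g x) {i j : ℕ}
    (hj : j < P.length) (hocc : f ≤ occCount (strSub P i j) T) : kmersGood g k P i j := by
  intro p hip hpk
  refine hg _ (by simp only [List.length_take, List.length_drop]; omega) ?_
  exact hocc.trans (occCount_le_occCount_of_isInfix (take_drop_isInfix_strSub P hip hpk) T)

theorem exists_isKebabPM_of_kmersGood {α : Type*} {g : List α → Prop} {k : ℕ} {P : List α}
    {i j : ℕ} (hgood : kmersGood g k P i j) (hj : j < P.length) (hlen : i + k ≤ j + 1) :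
    ∃ a b, IsKebabPM g k P a b ∧ a ≤ i ∧ j ≤ b := by
  classical
  have hexA : ∃ a, kmersGood g k P a j := ⟨i, hgood⟩
  set a := Nat.find hexA
  have hai : a ≤ i := Nat.find_min' hexA hgood
  set Q : ℕ → Prop := fun b => b < P.length ∧ kmersGood g k P a b
  have hQj : Q j := ⟨hj, Nat.find_spec hexA⟩
  set b := Nat.findGreatest Q P.length
  have hjb : j ≤ b := Nat.le_findGreatest hj.le hQj
  obtain ⟨hbP, hab⟩ : Q b := Nat.findGreatest_spec hj.le hQj
  refine ⟨a, b, ⟨hbP, by omega, hab, ?_, ?_⟩, hai, hjb⟩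
  · rcases Nat.eq_zero_or_pos a with ha0 | ha0
    · exact Or.inl ha0
    · exact Or.inr fun hbad => Nat.find_min hexA (Nat.sub_lt ha0 one_pos) (hbad.mono le_rfl hjb)
  · rcases Nat.lt_or_ge (b + 1) P.length with hb1 | hb1
    · exact Or.inr fun hbad => Nat.findGreatest_is_greatest (Nat.lt_succ_self b) hb1.le ⟨hb1, hbad⟩
    · exact Or.inl (le_antisymm hbP hb1)

theorem kebab_pseudoMEMs_contain_long_MEMs_general {α : Type*} [DecidableEq α] (k f : ℕ)
    (g : List α → Prop) (P T : List α)
    (hg : ∀ x : List α, x.length = k → f ≤ occCount x T → g x)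
    (i j : ℕ) (hmem : IsMEM f P T i j) (hlen : k ≤ j + 1 - i) :
    ∃ a b, IsKebabPM g k P a b ∧ a ≤ i ∧ j ≤ b := by
  obtain ⟨hij, hj, hocc, -, -⟩ := hmem
  exact exists_isKebabPM_of_kmersGood (kmersGood_of_le_occCount hg hj hocc) hj (by omega)

/-- Let `g` be any predicate on `k`-mers holding for every `k`-mer
occurring at least `f` times in `T` (modelling a Bloom filter with false positives).
Then every `f`-MEM of `P` with respect to `T` of length at least `k` is contained in
some KeBaB pseudo-MEM of `P`. -/
theorem kebab_pseudoMEMs_contain_long_MEMs {α : Type*} [DecidableEq α] (k f : ℕ)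
    (hk : 1 ≤ k) (hf : 1 ≤ f) (g : List α → Prop) (P T : List α)
    (hg : ∀ x : List α, x.length = k → f ≤ occCount x T → g x)
    (i j : ℕ) (hmem : IsMEM f P T i j) (hlen : k ≤ j + 1 - i) :
    ∃ a b, IsKebabPM g k P a b ∧ a ≤ i ∧ j ≤ b :=
  kebab_pseudoMEMs_contain_long_MEMs_general k f g P T hg i j hmem hlen
end

section
/- Let g' be any predicate on phrases such that g'(x) holds for every phrase x that occurs at least f times in PFP(T). Let S_3 = { PFP(P)[max(i−1,1)..min(j+1,N)] : PFP(P)[i..j] is a maximal substring of PFP(P) consisting only of phrases satisfying g' } and S_4 = { PFP(P)[i..i+1] : neither PFP(P)[i] nor PFP(P)[i+1] satisfies g' }. Then every phrase sequence in S_1 is contained in some phrase sequence in S_3, and every phrase sequence in S_2 is contained in some phrase sequence in S_3 ∪ S_4. (When g' holds exactly for the phrases occurring at least f times in PFP(T) and f = 1, every phrase sequence in S_2 is contained in some phrase sequence in S_4.) -/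
/-- The pair `(l, r)` of 0-indexed phrase positions delimits a phrase sequence in `S₃`:
`PFP(P)[l..r]` is obtained from a maximal run `PFP(P)[i..j]` of phrases satisfying `g'`
by extending one phrase in each direction where possible. -/
def inS3 {α : Type*} (w : ℕ) (h : List α → Bool) (P : List α) (g' : List α → Prop)
    (l r : ℕ) : Prop :=
  ∃ i j, i ≤ j ∧ j < (PFP w h P).length ∧
    (∀ c, i ≤ c → c ≤ j → g' ((PFP w h P).getD c [])) ∧
    (i = 0 ∨ ¬ g' ((PFP w h P).getD (i - 1) [])) ∧
    (j + 1 = (PFP w h P).length ∨ ¬ g' ((PFP w h P).getD (j + 1) [])) ∧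
    l = i - 1 ∧ r = min (j + 1) ((PFP w h P).length - 1)

/-- The pair `(l, r)` of 0-indexed phrase positions delimits a phrase sequence in `S₄`:
`r = l + 1` and neither phrase `PFP(P)[l]` nor phrase `PFP(P)[l+1]` satisfies `g'`. -/
def inS4 {α : Type*} (w : ℕ) (h : List α → Bool) (P : List α) (g' : List α → Prop)
    (l r : ℕ) : Prop :=
  r = l + 1 ∧ l + 1 < (PFP w h P).length ∧
  ¬ g' ((PFP w h P).getD l []) ∧ ¬ g' ((PFP w h P).getD (l + 1) [])

section Occurrences

variable {β : Type*}

theorem occursAt_iff_prefix_drop {S X : List β} {p : ℕ} (hp : p ≤ X.length) :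
    occursAt S X p ↔ S <+: X.drop p := by
  rw [List.prefix_iff_eq_take]
  constructor
  · exact fun h => h.2.symm
  · intro h
    have hlen := (List.prefix_iff_eq_take.mpr h).length_le
    rw [List.length_drop] at hlen
    exact ⟨by omega, h.symm⟩

variable [DecidableEq β]

theorem occCount_le_of_infix_s12 {S S' X : List β} (hS : S <:+: S') :
    occCount S' X ≤ occCount S X := by
  obtain ⟨a, b, rfl⟩ := hS
  apply Finset.card_le_card_of_injOn (· + a.length)
  · intro p hp
    simp only [Finset.coe_filter, Finset.mem_range, Set.mem_ofPred_eq] at hp ⊢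
    obtain ⟨hpX, hocc⟩ := hp
    have hlen := hocc.1
    simp only [List.length_append] at hlen
    have hshift : S <+: X.drop (p + a.length) := by
      have := ((occursAt_iff_prefix_drop (by omega)).mp hocc).drop a.length
      simp only [List.drop_drop, List.append_assoc, List.drop_left] at this
      exact (List.prefix_append S b).trans this
    exact ⟨by omega, (occursAt_iff_prefix_drop (by omega)).mpr hshift⟩
  · exact fun _ _ _ _ => Nat.add_right_cancel

theorem infix_of_occCount_pos {S X : List β} (h : 0 < occCount S X) : S <:+: X := by
  obtain ⟨p, hp⟩ := Finset.card_pos.mp h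
  rw [Finset.mem_filter, Finset.mem_range] at hp
  exact ((occursAt_iff_prefix_drop (by omega)).mp hp.2).isInfix.trans
    (List.drop_suffix p X).isInfix

end Occurrences

theorem singleton_getD_infix_strSub {β : Type*} {l : List β} (d : β) {i j c : ℕ}
    (hic : i ≤ c) (hcj : c ≤ j) (hj : j < l.length) : [l.getD c d] <:+: strSub l i j := by
  rw [List.singleton_infix_iff, List.getD_eq_getElem _ _ (by omega), strSub,
    List.mem_take_iff_getElem]
  exact ⟨c - i, by simp; omega, by simp; congr 1; omega⟩

theorem le_occCount_singleton_of_isMEM {β : Type*} [DecidableEq β] {f : ℕ} {P T : List β}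
    {i j c : ℕ} (hmem : IsMEM f P T i j) (hic : i ≤ c) (hcj : c ≤ j) (d : β) :
    f ≤ occCount [P.getD c d] T :=
  hmem.2.2.1.trans (occCount_le_of_infix_s12 (singleton_getD_infix_strSub d hic hcj hmem.2.1))

section Runs

variable (Q : ℕ → Prop)

def IsMaximalRun (N i j : ℕ) : Prop :=
  i ≤ j ∧ j < N ∧ (∀ c, i ≤ c → c ≤ j → Q c) ∧
    (i = 0 ∨ ¬ Q (i - 1)) ∧ (j + 1 = N ∨ ¬ Q (j + 1))

theorem exists_run_end {N i j : ℕ} (hj : j < N) (hQ : ∀ c, i ≤ c → c ≤ j → Q c) :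
    ∃ j', j ≤ j' ∧ j' < N ∧ (∀ c, i ≤ c → c ≤ j' → Q c) ∧ (j' + 1 = N ∨ ¬ Q (j' + 1)) := by
  induction hk : N - (j + 1) generalizing j with
  | zero => exact ⟨j, le_rfl, hj, hQ, .inl (by omega)⟩
  | succ k ih =>
    by_cases hnext : Q (j + 1)
    · have hQ' : ∀ c, i ≤ c → c ≤ j + 1 → Q c := fun c hic hcj =>
        (Nat.lt_or_eq_of_le hcj).elim (fun hlt => hQ c hic (by omega)) (· ▸ hnext)
      obtain ⟨j', hjj', hrest⟩ := ih (by omega) hQ' (by omega)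
      exact ⟨j', by omega, hrest⟩
    · exact ⟨j, le_rfl, hj, hQ, .inr hnext⟩

theorem exists_run_start {i j : ℕ} (hQ : ∀ c, i ≤ c → c ≤ j → Q c) :
    ∃ i', i' ≤ i ∧ (∀ c, i' ≤ c → c ≤ j → Q c) ∧ (i' = 0 ∨ ¬ Q (i' - 1)) := by
  induction i with
  | zero => exact ⟨0, le_rfl, hQ, .inl rfl⟩
  | succ i ih =>
    by_cases hprev : Q i
    · have hQ' : ∀ c, i ≤ c → c ≤ j → Q c := fun c hic hcj =>
        (Nat.eq_or_lt_of_le hic).elim (· ▸ hprev) (fun hlt => hQ c hlt hcj)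
      obtain ⟨i', hi'i, hrest⟩ := ih hQ'
      exact ⟨i', by omega, hrest⟩
    · exact ⟨i + 1, le_rfl, hQ, .inr hprev⟩

theorem exists_isMaximalRun_of_forall {N i j : ℕ} (hij : i ≤ j) (hj : j < N)
    (hQ : ∀ c, i ≤ c → c ≤ j → Q c) :
    ∃ i' j', IsMaximalRun Q N i' j' ∧ i' ≤ i ∧ j ≤ j' := by
  obtain ⟨j', hjj', hj'N, hQ', hright⟩ := exists_run_end Q hj hQ
  obtain ⟨i', hi'i, hQ'', hleft⟩ := exists_run_start Q hQ'
  exact ⟨i', j', ⟨by omega, hj'N, hQ'', hleft, hright⟩, hi'i, hjj'⟩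

end Runs

section Cover

variable {α : Type*} (w : ℕ) (h : List α → Bool) (P : List α) (g' : List α → Prop)

theorem inS3_of_isMaximalRun {i j : ℕ}
    (hrun : IsMaximalRun (fun c => g' ((PFP w h P).getD c [])) (PFP w h P).length i j) :
    inS3 w h P g' (i - 1) (min (j + 1) ((PFP w h P).length - 1)) :=
  ⟨i, j, hrun.1, hrun.2.1, hrun.2.2.1, hrun.2.2.2.1, hrun.2.2.2.2, rfl, rfl⟩

theorem exists_inS3_cover {i j : ℕ} (hij : i ≤ j) (hj : j < (PFP w h P).length)
    (hg : ∀ c, i ≤ c → c ≤ j → g' ((PFP w h P).getD c [])) :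
    ∃ l r, inS3 w h P g' l r ∧ l ≤ i - 1 ∧ min (j + 1) ((PFP w h P).length - 1) ≤ r := by
  obtain ⟨i', j', hrun, hi'i, hjj'⟩ := exists_isMaximalRun_of_forall _ hij hj hg
  exact ⟨_, _, inS3_of_isMaximalRun w h P g' hrun, by omega, by omega⟩

theorem exists_inS3_or_inS4_cover_pair {l : ℕ} (hl : l + 1 < (PFP w h P).length) :
    ∃ l' r', (inS3 w h P g' l' r' ∨ inS4 w h P g' l' r') ∧ l' ≤ l ∧ l + 1 ≤ r' := by
  have cover_one : ∀ c, l ≤ c → c ≤ l + 1 → g' ((PFP w h P).getD c []) →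
      ∃ l' r', inS3 w h P g' l' r' ∧ l' ≤ l ∧ l + 1 ≤ r' := fun c hlc hcl hc => by
    obtain ⟨l', r', h3, hl', hr'⟩ := exists_inS3_cover w h P g' le_rfl (by omega)
      fun c' hc' hc'' => (le_antisymm hc'' hc') ▸ hc
    exact ⟨l', r', h3, by omega, by omega⟩
  by_cases hfst : g' ((PFP w h P).getD l [])
  · obtain ⟨l', r', h3, hle⟩ := cover_one l le_rfl (by omega) hfst
    exact ⟨l', r', .inl h3, hle⟩
  by_cases hsnd : g' ((PFP w h P).getD (l + 1) [])
  · obtain ⟨l', r', h3, hle⟩ := cover_one (l + 1) (by omega) le_rfl hsnd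
    exact ⟨l', r', .inl h3, hle⟩
  exact ⟨l, l + 1, .inr ⟨rfl, hl, hfst, hsnd⟩, le_rfl, le_rfl⟩

end Cover

theorem kebab_parse_combination_general {α : Type*} [DecidableEq α] (w f : ℕ)
    (h : List α → Bool) (P T : List α)
    (g' : List α → Prop)
    (hg' : ∀ x : List α, f ≤ occCount [x] (PFP w h T) → g' x) :
    (∀ l r, inS1 w f h P T l r →
        ∃ l' r', inS3 w h P g' l' r' ∧ l' ≤ l ∧ r ≤ r') ∧
    (∀ l r, inS2 w h P T l r →
        ∃ l' r', (inS3 w h P g' l' r' ∨ inS4 w h P g' l' r') ∧ l' ≤ l ∧ r ≤ r') ∧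
    ((∀ x : List α, g' x ↔ f ≤ occCount [x] (PFP w h T)) → f = 1 →
      ∀ l r, inS2 w h P T l r →
        ∃ l' r', inS4 w h P g' l' r' ∧ l' ≤ l ∧ r ≤ r') := by
  refine ⟨?_, ?_, ?_⟩
  · rintro l r ⟨i, j, hmem, rfl, rfl⟩
    exact exists_inS3_cover w h P g' hmem.1 hmem.2.1
      fun c hic hcj => hg' _ (le_occCount_singleton_of_isMEM hmem hic hcj [])
  · rintro l r ⟨rfl, hl, -, -⟩
    exact exists_inS3_or_inS4_cover_pair w h P g' hl
  · rintro hg'_iff rfl l r ⟨rfl, hl, hl_notMem, hr_notMem⟩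
    have not_g' : ∀ x, x ∉ PFP w h T → ¬ g' x := fun x hx hgx =>
      hx ((List.singleton_infix_iff _ _).mp (infix_of_occCount_pos ((hg'_iff x).mp hgx)))
    exact ⟨l, l + 1, ⟨rfl, hl, not_g' _ hl_notMem, not_g' _ hr_notMem⟩, le_rfl, le_rfl⟩

/-- Let `g'` be any predicate on phrases holding for every phrase
occurring at least `f` times in `PFP(T)`, and form `S₃` and `S₄` as above. Then every
phrase sequence in `S₁` is contained in some phrase sequence in `S₃`, and every phrase
sequence in `S₂` is contained in some phrase sequence in `S₃ ∪ S₄`; moreover, when `g'`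
holds exactly for the phrases occurring at least `f` times in `PFP(T)` and `f = 1`,
every phrase sequence in `S₂` is contained in some phrase sequence in `S₄`. -/
theorem kebab_parse_combination {α : Type*} [DecidableEq α] (w f : ℕ) (hw : 1 ≤ w)
    (hf : 1 ≤ f) (h : List α → Bool) (P T : List α)
    (hN : 2 ≤ (PFP w h P).length)
    (g' : List α → Prop)
    (hg' : ∀ x : List α, f ≤ occCount [x] (PFP w h T) → g' x) :
    (∀ l r, inS1 w f h P T l r →
        ∃ l' r', inS3 w h P g' l' r' ∧ l' ≤ l ∧ r ≤ r') ∧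
    (∀ l r, inS2 w h P T l r →
        ∃ l' r', (inS3 w h P g' l' r' ∨ inS4 w h P g' l' r') ∧ l' ≤ l ∧ r ≤ r') ∧
    ((∀ x : List α, g' x ↔ f ≤ occCount [x] (PFP w h T)) → f = 1 →
      ∀ l r, inS2 w h P T l r →
        ∃ l' r', inS4 w h P g' l' r' ∧ l' ≤ l ∧ r ≤ r') :=
  kebab_parse_combination_general w f h P T g' hg'
end

section
/- Let S be a string of length ℓ > 2w − 2 that occurs at position p in a string X and at position p' in a string Y. Then for every offset d with w − 1 ≤ d ≤ ℓ − w (i.e., within the central ℓ − 2w + 2 characters of the occurrences), position p + d is a phrase boundary of the minimizer-based parse of X if and only if position p' + d is a phrase boundary of the minimizer-based parse of Y; that is, the parsing of the central ℓ − 2w + 2 characters of S is always the same. -/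
/-- The `k`-mer occurrence of `S` at 0-indexed position `p` is a minimizer: some window
of `w` characters of `S` contains it and its `v`-value is minimum among the `v`-values
of the `k`-mer occurrences contained in that window. -/
def IsMinimizer {α : Type*} {V : Type*} [LinearOrder V] (k w : ℕ) (v : List α → V)
    (S : List α) (p : ℕ) : Prop :=
  p + k ≤ S.length ∧ ∃ q, q ≤ p ∧ p + k ≤ q + w ∧ q + w ≤ S.length ∧
    ∀ p', q ≤ p' → p' + k ≤ q + w → v ((S.drop p).take k) ≤ v ((S.drop p').take k)

/-- `b` is a phrase boundary of the minimizer-based parse of `S`: the cut after the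
first `b` characters of `S`, placed at the ending position of some minimizer. -/
def IsBoundary {α : Type*} {V : Type*} [LinearOrder V] (k w : ℕ) (v : List α → V)
    (S : List α) (b : ℕ) : Prop :=
  ∃ p, b = p + k ∧ IsMinimizer k w v S p

/-- k-mers inside an occurrence of `S` agree with the corresponding k-mers of `S`. -/
lemma kmer_eq {α : Type*} {S X : List α} {p : ℕ} (h : occursAt S X p)
    (i k : ℕ) (hik : i + k ≤ S.length) :
    (X.drop (p + i)).take k = (S.drop i).take k := by
  conv_rhs => rw [← h.2]
  rw [List.drop_take, List.take_take, ← List.drop_drop]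
  congr 1
  omega

lemma boundary_transfer {α : Type*} {V : Type*} [LinearOrder V]
    (k w : ℕ) (hk : 1 ≤ k) (hkw : k < w) (v : List α → V)
    (S X Y : List α) (p p' : ℕ)
    (hX : occursAt S X p) (hY : occursAt S Y p')
    (hlen : 2 * w - 2 < S.length)
    (d : ℕ) (hd1 : w ≤ d) (hd2 : d ≤ S.length - w + 1)
    (hB : IsBoundary k w v X (p + d)) : IsBoundary k w v Y (p' + d) := by
  obtain ⟨m, hb, hmk, q, hq1, hq2, hq3, hmin⟩ := hB
  have hX1 := hX.1
  have hY1 := hY.1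
  have hw2 : 2 ≤ w := by omega
  have hS.lengthw : w ≤ S.length := by omega
  have hdl : d + w ≤ S.length + 1 := by omega
  -- the minimizer position relative to S
  have hm : m = p + (d - k) := by omega
  have hqp : p ≤ q := by omega
  have hqe : q + w ≤ p + S.length := by omega
  refine ⟨p' + (d - k), by omega, by omega, p' + (q - p), by omega, by omega, by omega, ?_⟩
  intro p₂ h₂1 h₂2
  have hYm : (Y.drop (p' + (d - k))).take k = (S.drop (d - k)).take k :=
    kmer_eq hY (d - k) k (by omega)
  have hXm : (X.drop (p + (d - k))).take k = (S.drop (d - k)).take k :=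
    kmer_eq hX (d - k) k (by omega)
  have hj : p₂ = p' + (p₂ - p') := by omega
  have hY₂ := kmer_eq hY (p₂ - p') k (by omega)
  rw [← hj] at hY₂
  have hX₂ : (X.drop (p + (p₂ - p'))).take k = (S.drop (p₂ - p')).take k :=
    kmer_eq hX (p₂ - p') k (by omega)
  rw [hYm, hY₂, ← hXm, ← hX₂, ← hm]
  exact hmin (p + (p₂ - p')) (by omega) (by omega)

/-- Let `S` be a string of length `ℓ > 2w - 2` that occurs at
(0-indexed) position `p` in `X` and at position `p'` in `Y`. Then for every cut offset
`d` with `w ≤ d ≤ ℓ - w + 1` (the cuts within the central `ℓ - 2w + 2` characters of the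
occurrences), `p + d` is a phrase boundary of the minimizer-based parse of `X` if and
only if `p' + d` is a phrase boundary of the minimizer-based parse of `Y`: the parsing
of the central `ℓ - 2w + 2` characters of `S` is always the same. -/
theorem minimizer_parse_consistency {α : Type*} {V : Type*} [LinearOrder V]
    (k w : ℕ) (hk : 1 ≤ k) (hkw : k < w) (v : List α → V)
    (hv : ∀ x y : List α, x.length = k → y.length = k → v x = v y → x = y)
    (S X Y : List α) (p p' : ℕ)
    (hX : occursAt S X p) (hY : occursAt S Y p')
    (hlen : 2 * w - 2 < S.length)
    (d : ℕ) (hd1 : w ≤ d) (hd2 : d ≤ S.length - w + 1) :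
    (IsBoundary k w v X (p + d) ↔ IsBoundary k w v Y (p' + d)) :=
  ⟨boundary_transfer k w hk hkw v S X Y p p' hX hY hlen d hd1 hd2,
   boundary_transfer k w hk hkw v S Y X p' p hY hX hlen d hd1 hd2⟩
end

section
/- Let S be a string and let S[i..j] be a substring with k ≤ i, j ≤ |S| − w + k, and j − i + 1 > 2w − 2k + 2. Then S[i..j] contains a complete phrase of the minimizer-based parse of S, i.e., a phrase whose starting position is at least i and whose ending position is at most j. Consequently, if one seeks only MEMs of length greater than 2w − 2k + 2 (sufficiently far from the ends of the pattern), every such MEM contains at least one complete phrase. -/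
/-- Let `S` be a string and `S[i..j]` a substring (0-indexed, closed)
with `k ≤ i + 1`, `j + 1 ≤ |S| - w + k` and `j - i + 1 > 2w - 2k + 2`. Then `S[i..j]`
contains a complete phrase of the minimizer-based parse of `S`: there are two
consecutive boundaries `b < b'` with `i ≤ b` and `b' ≤ j + 1`, so the phrase they
delimit starts at position at least `i` and ends at position at most `j`. -/
theorem long_substring_contains_complete_phrase {α : Type*} {V : Type*} [LinearOrder V]
    (k w : ℕ) (hk : 1 ≤ k) (hkw : k < w) (v : List α → V)
    (hv : ∀ x y : List α, x.length = k → y.length = k → v x = v y → x = y)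
    (S : List α) (i j : ℕ)
    (hi : k ≤ i + 1) (hj : j + 1 ≤ S.length - w + k)
    (hij : 2 * w - 2 * k + 2 < j + 1 - i) :
    ∃ b b', IsBoundary k w v S b ∧ IsBoundary k w v S b' ∧ b < b' ∧
      (∀ c, b < c → c < b' → ¬ IsBoundary k w v S c) ∧
      i ≤ b ∧ b' ≤ j + 1 := by
  classical
  -- every window gives a boundary
  have key : ∀ q : ℕ, q + w ≤ S.length →
      ∃ b, IsBoundary k w v S b ∧ q + k ≤ b ∧ b ≤ q + w := by
    intro q hq
    obtain ⟨p, hpmem, hpmin⟩ := Finset.exists_min_image (Finset.Icc q (q + w - k))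
      (fun p' => v ((S.drop p').take k)) ⟨q, by simp; omega⟩
    rw [Finset.mem_Icc] at hpmem
    refine ⟨p + k, ⟨p, rfl, ?_, q, ?_, ?_, hq, ?_⟩, by omega, by omega⟩
    · omega
    · omega
    · omega
    · intro p' hq' hp'
      exact hpmin p' (Finset.mem_Icc.mpr ⟨hq', by omega⟩)
  obtain ⟨b1, hb1, hb1l, hb1u⟩ := key (i + 1 - k) (by omega)
  obtain ⟨b2, hb2, hb2l, hb2u⟩ := key (j + 1 - w) (by omega)
  have hb12 : b1 < b2 := by omega
  set P : ℕ → Prop := fun c => b1 ≤ c ∧ IsBoundary k w v S c with hP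
  have hPb1 : P b1 := ⟨le_refl _, hb1⟩
  set b := Nat.findGreatest P (b2 - 1) with hb
  have hbspec : P b := Nat.findGreatest_spec (P := P) (m := b1) (by omega) hPb1
  have hble : b ≤ b2 - 1 := Nat.findGreatest_le _
  set Q : ℕ → Prop := fun c => b < c ∧ IsBoundary k w v S c with hQ
  have hQex : ∃ c, Q c := ⟨b2, by omega, hb2⟩
  set b' := Nat.find hQex with hb'
  have hb'spec : Q b' := Nat.find_spec hQex
  have hb'le : b' ≤ b2 := Nat.find_le (by exact ⟨by omega, hb2⟩)
  refine ⟨b, b', hbspec.2, hb'spec.2, hb'spec.1, ?_, by omega, by omega⟩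
  intro c hc1 hc2 hcB
  have hcltb2 : c < b2 := lt_of_lt_of_le hc2 hb'le
  have := Nat.findGreatest_is_greatest (P := P) (n := b2 - 1) (k := c) hc1 (by omega)
  exact this ⟨by omega, hcB⟩
end
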